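/- arXiv:math/0009018 — 2 statements merged into one kernel-verified Lean document; each statement's English description precedes it below -/
import Mathlib

section
/- Suppose there exist distinct points x_0, x_1, …, x_k in I such that for every permutation π of {0, 1, …, k} other than the identity, Σ_{j=0}^k r_j(x_j) ≠ Σ_{j=0}^k r_j(x_{π(j)}). Then there exists ε > 0 such that the degeneracy condition fails at every D ∈ (0, ε); that is, the degeneracy condition cannot hold at distortion levels D > 0 arbitrarily close to zero. -/
open Real MeasureTheory Finset
open scoped Classical

/-- `Q` is a probability mass function on `Fin k`. -/
def IsPmf {k : ℕ} (Q : Fin k → ℝ) : Prop := (∀ j, 0 ≤ Q j) ∧ ∑ j, Q j = 1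

/-- `Λ_{P,Q}(λ) = E_P[ln Σ_j Q_j e^{λ ρ(X,a_j)}]`. -/
noncomputable def Lam {k : ℕ} (P : Measure ℝ) (ρ : ℝ → Fin k → ℝ)
    (Q : Fin k → ℝ) (l : ℝ) : ℝ :=
  ∫ x, Real.log (∑ j, Q j * Real.exp (l * ρ x j)) ∂P

/-- The cost `∫ Σ_j W(x)({a_j}) log₂ (W(x)({a_j}) / Q_j) dP(x)` of a Markov kernel,
with the conventions `0 · log 0 = 0` (automatic in Lean) and value `⊤` if on a set of
positive `P`-measure `w x j > 0` for some `j` with `Q j = 0`. -/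
noncomputable def wCost {k : ℕ} (P : Measure ℝ) (Q : Fin k → ℝ)
    (w : ℝ → Fin k → ℝ) : EReal :=
  if ∀ᵐ x ∂P, ∀ j, 0 < w x j → 0 < Q j then
    ((∫ x, ∑ j, w x j * Real.logb 2 (w x j / Q j) ∂P : ℝ) : EReal)
  else ⊤

/-- `R(P,Q,D)`: infimum over Markov kernels `w` from `ℝ` to `Fin k` with
`∫ Σ_j w x j ρ(x,a_j) dP ≤ D` of the relative-entropy cost. -/
noncomputable def RPQ {k : ℕ} (P : Measure ℝ) (ρ : ℝ → Fin k → ℝ)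
    (Q : Fin k → ℝ) (D : ℝ) : EReal :=
  ⨅ w ∈ {w : ℝ → Fin k → ℝ | Measurable w ∧ (∀ x j, 0 ≤ w x j) ∧
      (∀ x, ∑ j, w x j = 1) ∧ ∫ x, ∑ j, w x j * ρ x j ∂P ≤ D}, wCost P Q w

/-- The rate-distortion function `R(D) = inf_Q R(P,Q,D)`. -/
noncomputable def RofD {k : ℕ} (P : Measure ℝ) (ρ : ℝ → Fin k → ℝ) (D : ℝ) : EReal :=
  ⨅ Q ∈ {Q : Fin k → ℝ | IsPmf Q}, RPQ P ρ Q D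

/-- `D_max = min_j E_P[ρ(X,a_j)]`. -/
noncomputable def Dmax {k : ℕ} (P : Measure ℝ) (ρ : ℝ → Fin k → ℝ) : ℝ :=
  sInf (Set.range fun j => ∫ x, ρ x j ∂P)

/-- The degeneracy condition at distortion level `D`: there are a pmf `Q*` achieving
`R(P,Q*,D) = R(D)` and `λ* < 0` with `Λ'_{P,Q*}(λ*) = D`,
`λ*·D − Λ_{P,Q*}(λ*) = (ln 2)·R(D)`, and `x ↦ Σ_j Q*_j e^{λ* ρ(x,a_j)}` constant
for `P`-almost every `x`. -/
def DegenAt {k : ℕ} (P : Measure ℝ) (ρ : ℝ → Fin k → ℝ) (D : ℝ) : Prop :=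
  ∃ Q : Fin k → ℝ, IsPmf Q ∧ RPQ P ρ Q D = RofD P ρ D ∧
    ∃ l : ℝ, l < 0 ∧ HasDerivAt (Lam P ρ Q) D l ∧
      ((l * D - Lam P ρ Q l : ℝ) : EReal) = (Real.log 2 : EReal) * RofD P ρ D ∧
      ∃ c : ℝ, ∀ᵐ x ∂P, ∑ j, Q j * Real.exp (l * ρ x j) = c

/-!
If the degeneracy condition holds at `D` with slope `λ* < 0`, then
`φ(x) = Σ_j Q*_j e^{λ* ρ(x, a_j)}` is `P`-a.e. equal to a constant `c`; since `φ` is continuous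
on `I` and `P` has a positive density there, `φ = c` on all of `I`. Evaluated at `x_0, …, x_k`
this says that `(-c, Q*) ≠ 0` lies in the kernel of the matrix `(e^{λ* r_j(x_i)})_{i,j}`, so its
determinant vanishes. But that determinant is the exponential sum
`Σ_π sgn π · e^{λ* Σ_j r_j(x_{π j})}`, in which no other permutation shares the exponent of the
identity; its term of least exponent therefore has a nonzero coefficient and dominates as
`λ* → -∞`, so the determinant is nonzero for all `λ* ≤ λ₀`. Finally
`D = Λ'(λ*) ≥ e^{λ* M} D_max`, so `D < e^{λ₀ M} D_max` forces `λ* < λ₀`.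
-/

open Filter Topology

theorem eventually_atBot_sum_mul_exp_ne_zero_of_finset (S : Finset ℝ) (b : ℝ → ℝ)
    (h : ∃ t ∈ S, b t ≠ 0) : ∀ᶠ l in atBot, ∑ t ∈ S, b t * exp (l * t) ≠ 0 := by
  set S' := S.filter (b · ≠ 0)
  have hS' : S'.Nonempty := by
    obtain ⟨t, ht, hbt⟩ := h
    exact ⟨t, mem_filter.2 ⟨ht, hbt⟩⟩
  set m := S'.min' hS'
  have hm : b m ≠ 0 := (mem_filter.1 (S'.min'_mem hS')).2
  -- After dividing by `exp (l * m)`, every term but the one of the least exponent vanishes.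
  have hlim : Tendsto (fun l => ∑ t ∈ S', b t * exp (l * (t - m))) atBot
      (𝓝 (∑ t ∈ S', if t = m then b t else 0)) := by
    refine tendsto_finsetSum _ fun t ht => ?_
    rcases (S'.min'_le t ht).eq_or_lt with hmt | hmt
    · rw [if_pos hmt.symm, ← hmt, sub_self]
      simp
    · have : Tendsto (fun l : ℝ => l * (t - m)) atBot atBot :=
        tendsto_id.atBot_mul_const (sub_pos.2 hmt)
      rw [if_neg hmt.ne']
      simpa using (tendsto_exp_atBot.comp this).const_mul (b t)
  rw [sum_ite_eq', if_pos (S'.min'_mem hS')] at hlim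
  filter_upwards [hlim.eventually_ne hm] with l hl
  have hfactor : ∑ t ∈ S, b t * exp (l * t)
      = exp (l * m) * ∑ t ∈ S', b t * exp (l * (t - m)) := by
    rw [mul_sum, sum_filter_of_ne fun t _ ht => ?_]
    · refine sum_congr rfl fun t _ => ?_
      rw [mul_sub, exp_sub]
      field_simp
    · exact left_ne_zero_of_mul (right_ne_zero_of_mul ht)
  rw [hfactor]
  exact mul_ne_zero (exp_pos _).ne' hl

theorem eventually_atBot_sum_mul_exp_ne_zero {ι : Type*} [Fintype ι] (c T : ι → ℝ)
    (t₀ : ℝ) (h : ∑ i with T i = t₀, c i ≠ 0) :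
    ∀ᶠ l in atBot, ∑ i, c i * exp (l * T i) ≠ 0 := by
  have hgroup : ∀ l, ∑ i, c i * exp (l * T i)
      = ∑ t ∈ univ.image T, (∑ i with T i = t, c i) * exp (l * t) := fun l => by
    refine (sum_image' _ fun i _ => ?_).symm
    rw [sum_mul]
    exact sum_congr rfl fun j hj => by rw [(mem_filter.1 hj).2]
  simp only [hgroup]
  refine eventually_atBot_sum_mul_exp_ne_zero_of_finset _ _ ⟨t₀, ?_, h⟩
  obtain ⟨i, hi, -⟩ := exists_ne_zero_of_sum_ne_zero h
  exact mem_image.2 ⟨i, mem_univ i, (mem_filter.1 hi).2⟩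

theorem eventually_atBot_det_exp_ne_zero {n : Type*} [Fintype n] [DecidableEq n]
    (E : Matrix n n ℝ)
    (hE : ∀ σ : Equiv.Perm n, σ ≠ 1 → ∑ i, E (σ i) i ≠ ∑ i, E i i) :
    ∀ᶠ l in atBot, (Matrix.of fun i j => exp (l * E i j)).det ≠ 0 := by
  have hdet : ∀ l, (Matrix.of fun i j => exp (l * E i j)).det
      = ∑ σ : Equiv.Perm n, ((Equiv.Perm.sign σ : ℤ) : ℝ) * exp (l * ∑ i, E (σ i) i) :=
    fun l => by simp only [Matrix.det_apply', Matrix.of_apply, mul_sum, exp_sum]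
  simp only [hdet]
  refine eventually_atBot_sum_mul_exp_ne_zero _ _ (∑ i, E i i) ?_
  have hfilter : ({σ | ∑ i, E (σ i) i = ∑ i, E i i} : Finset (Equiv.Perm n)) = {1} := by
    ext σ
    simp only [mem_filter, mem_univ, true_and, mem_singleton]
    exact ⟨not_imp_not.1 (hE σ), fun h => h ▸ rfl⟩
  simp [hfilter]

section Tilted

variable {ι : Type*} [Fintype ι] {Q : ι → ℝ}

noncomputable def tiltedMean (Q y : ι → ℝ) (l : ℝ) : ℝ :=
  (∑ j, Q j * y j * exp (l * y j)) / ∑ j, Q j * exp (l * y j)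

theorem sum_mul_exp_pos (hQ0 : ∀ j, 0 ≤ Q j) (hQ1 : ∑ j, Q j = 1) (f : ι → ℝ) :
    0 < ∑ j, Q j * exp (f j) := by
  obtain ⟨j, -, hj⟩ := exists_ne_zero_of_sum_ne_zero (hQ1 ▸ one_ne_zero : ∑ j, Q j ≠ 0)
  exact sum_pos' (fun i _ => mul_nonneg (hQ0 i) (exp_pos _).le)
    ⟨j, mem_univ j, mul_pos ((hQ0 j).lt_of_ne' hj) (exp_pos _)⟩

theorem abs_log_sum_mul_exp_le (hQ0 : ∀ j, 0 ≤ Q j) (hQ1 : ∑ j, Q j = 1) {f : ι → ℝ}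
    {B : ℝ} (hf : ∀ j, |f j| ≤ B) : |log (∑ j, Q j * exp (f j))| ≤ B := by
  have hpos := sum_mul_exp_pos hQ0 hQ1 f
  have hlow : exp (-B) ≤ ∑ j, Q j * exp (f j) := by
    rw [← one_mul (exp (-B)), ← hQ1, sum_mul]
    exact sum_le_sum fun j _ =>
      mul_le_mul_of_nonneg_left (exp_le_exp.2 (neg_le_of_abs_le (hf j))) (hQ0 j)
  have hup : ∑ j, Q j * exp (f j) ≤ exp B := by
    rw [← one_mul (exp B), ← hQ1, sum_mul]
    exact sum_le_sum fun j _ =>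
      mul_le_mul_of_nonneg_left (exp_le_exp.2 (le_of_abs_le (hf j))) (hQ0 j)
  rw [abs_le, le_log_iff_exp_le hpos, log_le_iff_le_exp hpos]
  exact ⟨hlow, hup⟩

theorem tiltedMean_nonneg (hQ0 : ∀ j, 0 ≤ Q j) {y : ι → ℝ} (hy : ∀ j, 0 ≤ y j)
    (l : ℝ) : 0 ≤ tiltedMean Q y l :=
  div_nonneg (sum_nonneg fun j _ => mul_nonneg (mul_nonneg (hQ0 j) (hy j)) (exp_pos _).le)
    (sum_nonneg fun j _ => mul_nonneg (hQ0 j) (exp_pos _).le)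

theorem tiltedMean_le (hQ0 : ∀ j, 0 ≤ Q j) (hQ1 : ∑ j, Q j = 1) {y : ι → ℝ} {M : ℝ}
    (hy : ∀ j, y j ≤ M) (l : ℝ) : tiltedMean Q y l ≤ M := by
  rw [tiltedMean, div_le_iff₀ (sum_mul_exp_pos hQ0 hQ1 _), mul_sum]
  refine sum_le_sum fun j _ => ?_
  have := mul_le_mul_of_nonneg_right (hy j) (mul_nonneg (hQ0 j) (exp_pos (l * y j)).le)
  linarith

theorem exp_mul_sum_le_tiltedMean (hQ0 : ∀ j, 0 ≤ Q j) (hQ1 : ∑ j, Q j = 1) {y : ι → ℝ}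
    {M l : ℝ} (hy0 : ∀ j, 0 ≤ y j) (hyM : ∀ j, y j ≤ M) (hl : l ≤ 0) :
    exp (l * M) * ∑ j, Q j * y j ≤ tiltedMean Q y l := by
  have hZ : ∑ j, Q j * exp (l * y j) ≤ 1 :=
    hQ1 ▸ sum_le_sum fun j _ => mul_le_of_le_one_right (hQ0 j)
      (exp_le_one_iff.2 (mul_nonpos_of_nonpos_of_nonneg hl (hy0 j)))
  calc exp (l * M) * ∑ j, Q j * y j
      ≤ ∑ j, Q j * y j * exp (l * y j) := by
        rw [mul_sum]
        refine sum_le_sum fun j _ => ?_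
        rw [mul_comm]
        exact mul_le_mul_of_nonneg_left (exp_le_exp.2 (mul_le_mul_of_nonpos_left (hyM j) hl))
          (mul_nonneg (hQ0 j) (hy0 j))
    _ ≤ tiltedMean Q y l :=
        le_div_self (sum_nonneg fun j _ => mul_nonneg (mul_nonneg (hQ0 j) (hy0 j))
          (exp_pos _).le) (sum_mul_exp_pos hQ0 hQ1 _) hZ

theorem hasDerivAt_log_sum_mul_exp (hQ0 : ∀ j, 0 ≤ Q j) (hQ1 : ∑ j, Q j = 1) (y : ι → ℝ)
    (l : ℝ) : HasDerivAt (fun t => log (∑ j, Q j * exp (t * y j))) (tiltedMean Q y l) l := by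
  have hZ : HasDerivAt (fun t => ∑ j, Q j * exp (t * y j))
      (∑ j, Q j * y j * exp (l * y j)) l := by
    refine HasDerivAt.fun_sum fun j _ => ?_
    rw [mul_right_comm, mul_assoc]
    exact ((hasDerivAt_mul_const (y j)).exp).const_mul (Q j)
  exact hZ.log (sum_mul_exp_pos hQ0 hQ1 _).ne'

end Tilted

section Density

variable {P : Measure ℝ} {g : ℝ → ℝ} {T : Set ℝ}

theorem volume_restrict_absolutelyContinuous_of_density (hT : MeasurableSet T)
    (hg : Measurable g) (hgpos : ∀ x ∈ T, 0 < g x)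
    (habs : ∀ s ⊆ T, MeasurableSet s → ENNReal.ofReal (∫ x in s, g x) ≤ P s) :
    volume.restrict T ≪ P := by
  refine Measure.AbsolutelyContinuous.mk fun s hs hPs => ?_
  rw [Measure.restrict_apply hs]
  -- Truncate so that `g` is integrable on each piece; otherwise `∫ x in s, g x` is a junk `0`.
  set S : ℕ → Set ℝ := fun n => s ∩ T ∩ {x | g x ≤ n} ∩ Metric.closedBall 0 n
  have hcover : s ∩ T ⊆ ⋃ n, S n := fun x hx => by
    obtain ⟨n, hn⟩ := exists_nat_ge (max (g x) |x|)
    exact Set.mem_iUnion.2 ⟨n, ⟨⟨hx, (le_max_left _ _).trans hn⟩,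
      mem_closedBall_zero_iff.2 ((le_max_right _ _).trans hn)⟩⟩
  refine measure_mono_null hcover (measure_iUnion_null fun n => ?_)
  have hST : S n ⊆ T := fun x hx => hx.1.1.2
  have hSmeas : MeasurableSet (S n) :=
    ((hs.inter hT).inter (measurableSet_le hg measurable_const)).inter
      Metric.isClosed_closedBall.measurableSet
  have hgint : IntegrableOn g (S n) :=
    Measure.integrableOn_of_bounded (measure_mono Set.inter_subset_right |>.trans_lt
      measure_closedBall_lt_top).ne hg.aestronglyMeasurable
      ((ae_restrict_iff' hSmeas).2 (ae_of_all _ fun x hx => by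
        rw [norm_of_nonneg (hgpos x (hST hx)).le]; exact hx.1.2))
  have hnonneg : 0 ≤ᵐ[volume.restrict (S n)] g :=
    (ae_restrict_iff' hSmeas).2 (ae_of_all _ fun x hx => (hgpos x (hST hx)).le)
  have hint : ¬ 0 < ∫ x in S n, g x := fun hpos => by
    have := habs (S n) hST hSmeas
    rw [measure_mono_null (fun x hx => hx.1.1.1) hPs, nonpos_iff_eq_zero,
      ENNReal.ofReal_eq_zero] at this
    linarith
  rw [setIntegral_pos_iff_support_of_nonneg_ae hnonneg hgint, not_lt, nonpos_iff_eq_zero] at hint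
  exact measure_mono_null (Set.subset_inter (fun x hx => (hgpos x (hST hx)).ne') subset_rfl) hint

theorem eqOn_of_ae_eq_of_density (hT : IsOpen T) (hg : Measurable g)
    (hgpos : ∀ x ∈ T, 0 < g x)
    (habs : ∀ s ⊆ T, MeasurableSet s → ENNReal.ofReal (∫ x in s, g x) ≤ P s)
    {φ : ℝ → ℝ} (hφ : ContinuousOn φ T) {c : ℝ} (hc : ∀ᵐ x ∂P, φ x = c) :
    Set.EqOn φ (fun _ => c) T :=
  Measure.eqOn_open_of_ae_eq
    ((volume_restrict_absolutelyContinuous_of_density hT.measurableSet hg hgpos habs).ae_eq hc)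
    hT hφ continuousOn_const

end Density

section RateDistortion

variable {k : ℕ} {P : Measure ℝ} {ρ : ℝ → Fin k → ℝ} {M : ℝ} {Q : Fin k → ℝ}

theorem IsPmf.ne_zero (hQ : IsPmf Q) : Q ≠ 0 := by
  rintro rfl
  simpa using hQ.2

theorem Dmax_le_integral (j : Fin k) : Dmax P ρ ≤ ∫ x, ρ x j ∂P :=
  csInf_le (Set.finite_range _).bddBelow ⟨j, rfl⟩

theorem hasDerivAt_Lam [IsFiniteMeasure P] (hρmeas : ∀ j, Measurable fun x => ρ x j)
    (hρnn : ∀ x j, 0 ≤ ρ x j) (hρM : ∀ x j, ρ x j ≤ M) (hQ : IsPmf Q) (l : ℝ) :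
    Integrable (fun x => tiltedMean Q (ρ x) l) P ∧
      HasDerivAt (Lam P ρ Q) (∫ x, tiltedMean Q (ρ x) l ∂P) l := by
  have hmeas : ∀ t, Measurable fun x => ∑ j, Q j * exp (t * ρ x j) := fun t =>
    measurable_sum _ fun j _ => measurable_const.mul ((hρmeas j).const_mul t).exp
  have hmeas' : Measurable fun x => tiltedMean Q (ρ x) l :=
    (measurable_sum _ fun j _ => (measurable_const.mul (hρmeas j)).mul
      ((hρmeas j).const_mul l).exp).div (hmeas l)
  have hlog_int : Integrable (fun x => log (∑ j, Q j * exp (l * ρ x j))) P :=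
    Integrable.of_bound (hmeas l).log.aestronglyMeasurable (|l| * M) (ae_of_all _ fun x =>
      abs_log_sum_mul_exp_le hQ.1 hQ.2 fun j => by
        rw [abs_mul, abs_of_nonneg (hρnn x j)]
        exact mul_le_mul_of_nonneg_left (hρM x j) (abs_nonneg l))
  exact hasDerivAt_integral_of_dominated_loc_of_deriv_le (Metric.ball_mem_nhds l one_pos)
    (Filter.Eventually.of_forall fun t => (hmeas t).log.aestronglyMeasurable) hlog_int
    hmeas'.aestronglyMeasurable
    (ae_of_all _ fun x t _ => by
      rw [norm_of_nonneg (tiltedMean_nonneg hQ.1 (hρnn x) t)]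
      exact tiltedMean_le hQ.1 hQ.2 (hρM x) t)
    (integrable_const M)
    (ae_of_all _ fun x t _ => hasDerivAt_log_sum_mul_exp hQ.1 hQ.2 (ρ x) t)

theorem exp_mul_Dmax_le_of_hasDerivAt_Lam [IsFiniteMeasure P]
    (hρmeas : ∀ j, Measurable fun x => ρ x j) (hρnn : ∀ x j, 0 ≤ ρ x j)
    (hρM : ∀ x j, ρ x j ≤ M) (hQ : IsPmf Q) {l D : ℝ} (hl : l ≤ 0)
    (hD : HasDerivAt (Lam P ρ Q) D l) : exp (l * M) * Dmax P ρ ≤ D := by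
  obtain ⟨hint, hderiv⟩ := hasDerivAt_Lam (P := P) hρmeas hρnn hρM hQ l
  have hρint : ∀ j, Integrable (fun x => ρ x j) P := fun j =>
    Integrable.of_bound (hρmeas j).aestronglyMeasurable M
      (ae_of_all _ fun x => (norm_of_nonneg (hρnn x j)).trans_le (hρM x j))
  have hDmax : Dmax P ρ ≤ ∑ j, Q j * ∫ x, ρ x j ∂P := by
    rw [← one_mul (Dmax P ρ), ← hQ.2, sum_mul]
    exact sum_le_sum fun j _ => mul_le_mul_of_nonneg_left (Dmax_le_integral j) (hQ.1 j)
  calc exp (l * M) * Dmax P ρ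
      ≤ exp (l * M) * ∑ j, Q j * ∫ x, ρ x j ∂P :=
        mul_le_mul_of_nonneg_left hDmax (exp_pos _).le
    _ = ∫ x, exp (l * M) * ∑ j, Q j * ρ x j ∂P := by
        rw [integral_const_mul, integral_finsetSum _ fun j _ => (hρint j).const_mul (Q j)]
        simp only [integral_const_mul]
    _ ≤ ∫ x, tiltedMean Q (ρ x) l ∂P :=
        integral_mono ((integrable_finsetSum _ fun j _ => (hρint j).const_mul (Q j)).const_mul _)
          hint fun x => exp_mul_sum_le_tiltedMean hQ.1 hQ.2 (hρnn x) (hρM x) hl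
    _ = D := hD.unique hderiv |>.symm

end RateDistortion

theorem Matrix.det_eq_zero_of_sum_mul_succ_eq_const {R : Type*} [CommRing R] [IsDomain R]
    {k : ℕ} (A : Matrix (Fin (k + 1)) (Fin (k + 1)) R) (hA : ∀ i, A i 0 = 1) {w : Fin k → R}
    (hw : w ≠ 0) {c : R} (h : ∀ i, ∑ j, w j * A i j.succ = c) : A.det = 0 := by
  refine Matrix.exists_mulVec_eq_zero_iff.1 ⟨Fin.cons (-c) w, fun h0 => hw ?_, ?_⟩
  · exact funext fun j => by simpa using congrFun h0 j.succ
  · ext i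
    simp [Matrix.mulVec, dotProduct, Fin.sum_univ_succ, hA, mul_comm, h]

theorem stmt_5_general {k : ℕ} (M : ℝ)
    (ρ : ℝ → Fin k → ℝ) (hρmeas : ∀ j, Measurable fun x => ρ x j)
    (hρnn : ∀ x j, 0 ≤ ρ x j) (hρM : ∀ x j, ρ x j ≤ M)
    (hρmin : ∀ x, ∃ j, ρ x j = 0)
    (P : Measure ℝ) [IsProbabilityMeasure P]
    (a b : ℝ)
    (g : ℝ → ℝ) (hg : Measurable g) (hgpos : ∀ x ∈ Set.Ioo a b, 0 < g x)
    (habs : ∀ s ⊆ Set.Ioo a b, MeasurableSet s → ENNReal.ofReal (∫ x in s, g x) ≤ P s)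
    (hcont : ∀ j, ContinuousOn (fun x => ρ x j) (Set.Ioo a b))
    (hDmax : 0 < Dmax P ρ)
    (r : Fin (k + 1) → ℝ → ℝ)
    (hr0 : ∀ x, r 0 x = 0)
    (hrsucc : ∀ (j : Fin k) (x : ℝ), r j.succ x = ρ x j)
    (pts : Fin (k + 1) → ℝ) (hptsI : ∀ j, pts j ∈ Set.Ioo a b)
    (hcond : ∀ perm : Equiv.Perm (Fin (k + 1)), perm ≠ 1 →
      ∑ j, r j (pts j) ≠ ∑ j, r j (pts (perm j))) :
    ∃ ε > (0 : ℝ), ∀ D : ℝ, 0 < D → D < ε → D < Dmax P ρ → ¬ DegenAt P ρ D := by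
  have hM : 0 ≤ M := by
    obtain ⟨j, hj⟩ := hρmin 0
    exact hj ▸ hρM 0 j
  obtain ⟨l₀, hl₀⟩ := (eventually_atBot_det_exp_ne_zero (Matrix.of fun i j => r j (pts i))
    fun σ hσ => by simpa using (hcond σ hσ).symm).exists_forall_of_atBot
  refine ⟨exp (l₀ * M) * Dmax P ρ, by positivity, fun D _ hDε _ hdegen => ?_⟩
  obtain ⟨Q, hQ, -, l, hl, hD, -, c, hc⟩ := hdegen
  have hll₀ : l < l₀ := by
    have := (exp_mul_Dmax_le_of_hasDerivAt_Lam hρmeas hρnn hρM hQ hl.le hD).trans_lt hDε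
    exact lt_of_mul_lt_mul_right (exp_lt_exp.1 (lt_of_mul_lt_mul_right this hDmax.le)) hM
  have hconst : Set.EqOn (fun x => ∑ j, Q j * exp (l * ρ x j)) (fun _ => c) (Set.Ioo a b) :=
    eqOn_of_ae_eq_of_density isOpen_Ioo hg hgpos habs
      (continuousOn_finsetSum _ fun j _ => continuousOn_const.mul
        (continuousOn_const.mul (hcont j)).rexp) hc
  refine hl₀ l hll₀.le (Matrix.det_eq_zero_of_sum_mul_succ_eq_const (c := c) _
    (fun i => by simp [hr0]) hQ.ne_zero fun i => ?_)
  simpa [hrsucc] using hconst (hptsI i)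

/-- **Theorem 3(b).** If there are distinct points `x_0,…,x_k` in `I` such that
`Σ_j r_j(x_j) ≠ Σ_j r_j(x_{π(j)})` for every non-identity permutation `π` of
`{0,1,…,k}`, then the degeneracy condition fails at every small enough
distortion level `D > 0`. -/
theorem stmt_5 {k : ℕ} (hk : 0 < k) (M : ℝ)
    (ρ : ℝ → Fin k → ℝ) (hρmeas : ∀ j, Measurable fun x => ρ x j)
    (hρnn : ∀ x j, 0 ≤ ρ x j) (hρM : ∀ x j, ρ x j ≤ M)
    (hρmin : ∀ x, ∃ j, ρ x j = 0)
    (P : Measure ℝ) [IsProbabilityMeasure P]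
    (a b : ℝ) (hab : a < b)
    (g : ℝ → ℝ) (hg : Measurable g) (hgpos : ∀ x ∈ Set.Ioo a b, 0 < g x)
    (habs : ∀ s ⊆ Set.Ioo a b, MeasurableSet s → ENNReal.ofReal (∫ x in s, g x) ≤ P s)
    (hcont : ∀ j, ContinuousOn (fun x => ρ x j) (Set.Ioo a b))
    (hDmax : 0 < Dmax P ρ)
    (r : Fin (k + 1) → ℝ → ℝ)
    (hr0 : ∀ x, r 0 x = 0)
    (hrsucc : ∀ (j : Fin k) (x : ℝ), r j.succ x = ρ x j)
    (pts : Fin (k + 1) → ℝ) (hptsI : ∀ j, pts j ∈ Set.Ioo a b)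
    (hptsinj : Function.Injective pts)
    (hcond : ∀ perm : Equiv.Perm (Fin (k + 1)), perm ≠ 1 →
      ∑ j, r j (pts j) ≠ ∑ j, r j (pts (perm j))) :
    ∃ ε > (0 : ℝ), ∀ D : ℝ, 0 < D → D < ε → D < Dmax P ρ → ¬ DegenAt P ρ D :=
  stmt_5_general M ρ hρmeas hρnn hρM hρmin P a b g hg hgpos habs hcont hDmax r hr0 hrsucc pts hptsI
    hcond
end

section
/- For every D ∈ (0, D_max), (ln 2)·R(D) = sup_{λ ≤ 0} [λ·D − Γ(λ)], where Γ(λ) := sup_Q Λ_{P,Q}(λ), the supremum taken over all probability mass functions Q on Â. -/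
open Real MeasureTheory Finset
open scoped Classical

/-- `D_min^{P,Q} = E_P[min_{a ∈ supp Q} ρ(X,a)]`. -/
noncomputable def DminPQ {k : ℕ} (P : Measure ℝ) (ρ : ℝ → Fin k → ℝ)
    (Q : Fin k → ℝ) : ℝ :=
  ∫ x, (⨅ j : {j : Fin k // 0 < Q j}, ρ x (j : Fin k)) ∂P

/-- `D_max^{P,Q} = Σ_j Q_j · E_P[ρ(X,a_j)]`. -/
noncomputable def DmaxPQ {k : ℕ} (P : Measure ℝ) (ρ : ℝ → Fin k → ℝ)
    (Q : Fin k → ℝ) : ℝ :=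
  ∑ j, Q j * ∫ x, ρ x j ∂P

/-- The Fenchel–Legendre transform `Λ*_{P,Q}(D) = sup_{λ ≤ 0} [λ·D − Λ_{P,Q}(λ)]`. -/
noncomputable def LamStar {k : ℕ} (P : Measure ℝ) (ρ : ℝ → Fin k → ℝ)
    (Q : Fin k → ℝ) (D : ℝ) : EReal :=
  ⨆ l ∈ Set.Iic (0 : ℝ), ((l * D - Lam P ρ Q l : ℝ) : EReal)

/-- `Γ(λ) = sup_Q Λ_{P,Q}(λ)`, the supremum over all pmfs `Q` on the reproduction
alphabet. -/
noncomputable def Gamma {k : ℕ} (P : Measure ℝ) (ρ : ℝ → Fin k → ℝ) (l : ℝ) : ℝ :=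
  sSup {y : ℝ | ∃ Q : Fin k → ℝ, IsPmf Q ∧ y = Lam P ρ Q l}

/-!
Lower bound: for a pmf `Q`, a kernel `W` of distortion `≤ D` and `λ ≤ 0`, Gibbs' inequality
against the tilted kernel `W_λ(x)(a_j) ∝ Q_j e^{λ ρ(x,a_j)}` gives
`λ D - Λ_{P,Q}(λ) ≤ ln 2 · cost(W)`, and `Λ_{P,Q} ≤ Γ`.

Upper bound: `λ ↦ λ D - Γ(λ)` is continuous (`Γ` is `M`-Lipschitz), vanishes at `0`, is positive
just left of `0` because `D < D_max`, and tends to `-∞` because `Γ ≥ -log k`; so it has a maximizer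
`λ* < 0`. A Danskin-type argument produces `Q*` attaining `Γ(λ*)` with `Λ'_{P,Q*}(λ*) = D`. The
kernel tilted from `Q*` at `λ*` then has distortion exactly `D` and cost `(λ* D - Γ(λ*)) / ln 2`.
-/

lemma isPmf_iff_mem_stdSimplex {k : ℕ} {Q : Fin k → ℝ} : IsPmf Q ↔ Q ∈ stdSimplex ℝ (Fin k) :=
  Iff.rfl

lemma IsPmf.uniform {k : ℕ} (hk : 0 < k) : IsPmf (fun _ : Fin k => (k : ℝ)⁻¹) :=
  ⟨fun _ => by positivity, by simp [Finset.card_univ]; field_simp⟩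

lemma IsPmf.exists_pos {k : ℕ} {Q : Fin k → ℝ} (hQ : IsPmf Q) : ∃ j, 0 < Q j := by
  by_contra! h
  have := Finset.sum_nonpos fun j (_ : j ∈ Finset.univ) => h j
  linarith [hQ.2]

lemma sum_mul_mem_Icc {ι : Type*} [Fintype ι] {w z : ι → ℝ} {a b : ℝ}
    (hw : w ∈ stdSimplex ℝ ι) (hz : ∀ j, z j ∈ Set.Icc a b) : ∑ j, w j * z j ∈ Set.Icc a b :=
  (convex_Icc a b).sum_mem (fun j _ => hw.1 j) hw.2 (fun j _ => hz j)

lemma norm_le_of_mem_Icc_zero {a M : ℝ} (h : a ∈ Set.Icc 0 M) : ‖a‖ ≤ M := by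
  rw [Real.norm_eq_abs, abs_of_nonneg h.1]; exact h.2

lemma exp_le_quadratic_of_nonpos {u : ℝ} (hu : u ≤ 0) : exp u ≤ 1 + u + u ^ 2 / 2 := by
  have hpos : 0 < 1 - u + u ^ 2 / 2 := by nlinarith
  have h : 1 - u + u ^ 2 / 2 ≤ exp (-u) := by
    simpa [sub_eq_add_neg] using quadratic_le_exp_of_nonneg (neg_nonneg.2 hu)
  rw [exp_neg, le_inv_comm₀ hpos (exp_pos u)] at h
  exact h.trans ((inv_le_iff_one_le_mul₀ hpos).2 (by nlinarith [sq_nonneg (u ^ 2)]))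

lemma exists_isMaxOn_Iic {f : ℝ → ℝ} (hf : Continuous f) {T l₀ : ℝ} (hl₀ : l₀ ≤ 0)
    (hfar : ∀ l < -T, f l ≤ f l₀) : ∃ ls ∈ Set.Iic (0 : ℝ), IsMaxOn f (Set.Iic 0) ls := by
  obtain ⟨ls, hls, hmax⟩ := isCompact_Icc.exists_isMaxOn
    (⟨l₀, min_le_right _ _, hl₀⟩ : (Set.Icc (min (-T) l₀) 0).Nonempty) hf.continuousOn
  refine ⟨ls, hls.2, fun l (hl : l ≤ 0) => ?_⟩
  rcases le_or_gt (min (-T) l₀) l with h | h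
  · exact hmax ⟨h, hl⟩
  · exact (hfar l (h.trans_le (min_le_left _ _))).trans (hmax ⟨min_le_right _ _, hl₀⟩)

lemma sub_le_mul_log_div {w q : ℝ} (hw : 0 ≤ w) (hwq : 0 < w → 0 < q) (hq : 0 ≤ q) :
    w - q ≤ w * log (w / q) := by
  rcases hw.eq_or_lt with rfl | hw
  · simpa using hq
  have hq := hwq hw
  calc w - q = w * (1 - (w / q)⁻¹) := by field_simp
    _ ≤ w * log (w / q) :=
        mul_le_mul_of_nonneg_left (one_sub_inv_le_log_of_pos (div_pos hw hq)) hw.le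

lemma sum_mul_log_div_nonneg {ι : Type*} [Fintype ι] {w v : ι → ℝ} (hw : w ∈ stdSimplex ℝ ι)
    (hv : v ∈ stdSimplex ℝ ι) (hwv : ∀ j, 0 < w j → 0 < v j) :
    0 ≤ ∑ j, w j * log (w j / v j) :=
  calc 0 = ∑ j, (w j - v j) := by rw [Finset.sum_sub_distrib, hw.2, hv.2, sub_self]
    _ ≤ _ := Finset.sum_le_sum fun j _ => sub_le_mul_log_div (hw.1 j) (hwv j) (hv.1 j)

lemma abs_mul_log_div_le {w q : ℝ} (hw : w ∈ Set.Icc (0 : ℝ) 1) (hwq : 0 < w → 0 < q) :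
    |w * log (w / q)| ≤ 1 + |log q| := by
  rcases hw.1.eq_or_lt with h | h
  · simp only [← h, zero_mul, abs_zero]; positivity
  rw [log_div h.ne' (hwq h).ne', mul_sub]
  calc |w * log w - w * log q| ≤ |w * log w| + |w * log q| := abs_sub _ _
    _ ≤ 1 + |log q| := by
        rw [mul_comm w (log w), abs_mul w, abs_of_pos h]
        gcongr
        · exact (abs_log_mul_self_lt w h hw.2).le
        · exact mul_le_of_le_one_left (abs_nonneg _) hw.2

lemma integral_sum_mul_logb {α : Type*} [MeasurableSpace α] (P : Measure α) {k : ℕ}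
    (w : α → Fin k → ℝ) (Q : Fin k → ℝ) :
    ∫ x, ∑ j, w x j * logb 2 (w x j / Q j) ∂P
      = (∫ x, ∑ j, w x j * log (w x j / Q j) ∂P) / log 2 := by
  simp_rw [logb, mul_div_assoc', ← Finset.sum_div]
  exact integral_div _ _

section Tilting

variable {α : Type*} {k : ℕ} {ρ : α → Fin k → ℝ} {Q : Fin k → ℝ} {M l : ℝ} {x : α}

noncomputable def partitionFn (ρ : α → Fin k → ℝ) (Q : Fin k → ℝ) (l : ℝ) (x : α) : ℝ :=
  ∑ j, Q j * exp (l * ρ x j)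

noncomputable def tiltedKernel (ρ : α → Fin k → ℝ) (Q : Fin k → ℝ) (l : ℝ) (x : α) (j : Fin k) :
    ℝ :=
  Q j * exp (l * ρ x j) / partitionFn ρ Q l x

lemma partitionFn_pos (hQ : IsPmf Q) : 0 < partitionFn ρ Q l x := by
  obtain ⟨j, hj⟩ := hQ.exists_pos
  exact Finset.sum_pos' (fun i _ => mul_nonneg (hQ.1 i) (exp_pos _).le)
    ⟨j, Finset.mem_univ _, mul_pos hj (exp_pos _)⟩

lemma partitionFn_zero (hQ : IsPmf Q) : partitionFn ρ Q 0 x = 1 := by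
  simp [partitionFn, hQ.2]

lemma tiltedKernel_mem_stdSimplex (hQ : IsPmf Q) :
    tiltedKernel ρ Q l x ∈ stdSimplex ℝ (Fin k) := by
  refine ⟨fun j => div_nonneg (mul_nonneg (hQ.1 j) (exp_pos _).le) (partitionFn_pos hQ).le, ?_⟩
  simp only [tiltedKernel, ← Finset.sum_div]
  exact div_self (partitionFn_pos hQ).ne'

lemma tiltedKernel_pos (hQ : IsPmf Q) {j : Fin k} (hj : 0 < Q j) :
    0 < tiltedKernel ρ Q l x j :=
  div_pos (mul_pos hj (exp_pos _)) (partitionFn_pos hQ)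

lemma pos_of_tiltedKernel_pos (hQ : IsPmf Q) {j : Fin k} (h : 0 < tiltedKernel ρ Q l x j) :
    0 < Q j := by
  refine lt_of_le_of_ne (hQ.1 j) fun hj => h.ne' ?_
  simp [tiltedKernel, ← hj]

lemma hasDerivAt_log_partitionFn (hQ : IsPmf Q) :
    HasDerivAt (fun t => log (partitionFn ρ Q t x))
      (∑ j, tiltedKernel ρ Q l x j * ρ x j) l := by
  have hZ : HasDerivAt (fun t => partitionFn ρ Q t x)
      (∑ j, Q j * (exp (l * ρ x j) * ρ x j)) l :=
    HasDerivAt.fun_sum fun j _ => ((hasDerivAt_mul_const (ρ x j)).exp).const_mul (Q j)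
  convert hZ.log (partitionFn_pos hQ).ne' using 1
  rw [Finset.sum_div]
  exact Finset.sum_congr rfl fun j _ => by rw [tiltedKernel]; ring

lemma abs_log_partitionFn_sub_le (hQ : IsPmf Q) (hx : ∀ j, ρ x j ∈ Set.Icc 0 M) (l' : ℝ) :
    |log (partitionFn ρ Q l x) - log (partitionFn ρ Q l' x)| ≤ M * |l - l'| :=
  convex_univ.norm_image_sub_le_of_norm_hasDerivWithin_le
    (fun _ _ => (hasDerivAt_log_partitionFn hQ).hasDerivWithinAt)
    (fun _ _ => norm_le_of_mem_Icc_zero (sum_mul_mem_Icc (tiltedKernel_mem_stdSimplex hQ) hx))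
    (Set.mem_univ l') (Set.mem_univ l)

lemma abs_log_partitionFn_le (hQ : IsPmf Q) (hx : ∀ j, ρ x j ∈ Set.Icc 0 M) :
    |log (partitionFn ρ Q l x)| ≤ M * |l| := by
  simpa [partitionFn_zero hQ] using abs_log_partitionFn_sub_le (l := l) hQ hx 0

lemma measurable_partitionFn [MeasurableSpace α] (hρ : ∀ j, Measurable fun x => ρ x j) :
    Measurable (partitionFn ρ Q l) :=
  Finset.measurable_sum _ fun j _ => by fun_prop

lemma measurable_tiltedKernel [MeasurableSpace α] (hρ : ∀ j, Measurable fun x => ρ x j) :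
    Measurable (tiltedKernel ρ Q l) :=
  measurable_pi_lambda _ fun j => by
    unfold tiltedKernel; have := measurable_partitionFn (Q := Q) (l := l) hρ; fun_prop

lemma continuous_partitionFn_prod :
    Continuous fun p : (Fin k → ℝ) × ℝ => partitionFn ρ p.1 p.2 x := by
  unfold partitionFn; fun_prop

lemma sum_mul_log_div_eq (hQ : IsPmf Q) {w : Fin k → ℝ} (hw : w ∈ stdSimplex ℝ (Fin k))
    (hwQ : ∀ j, 0 < w j → 0 < Q j) :
    ∑ j, w j * log (w j / Q j) = ∑ j, w j * log (w j / tiltedKernel ρ Q l x j)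
      + l * ∑ j, w j * ρ x j - log (partitionFn ρ Q l x) := by
  have hterm : ∀ j, w j * log (w j / Q j) = w j * log (w j / tiltedKernel ρ Q l x j)
      + l * (w j * ρ x j) - w j * log (partitionFn ρ Q l x) := fun j => by
    rcases (hw.1 j).eq_or_lt with h | h
    · simp [← h]
    have hZ := partitionFn_pos hQ (ρ := ρ) (l := l) (x := x)
    have hdiv : w j / tiltedKernel ρ Q l x j
        = w j / Q j * (partitionFn ρ Q l x * exp (-(l * ρ x j))) := by
      rw [tiltedKernel, exp_neg]; field_simp
    rw [hdiv, log_mul (div_pos h (hwQ j h)).ne' (by positivity), log_mul hZ.ne' (exp_pos _).ne',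
      log_exp]
    ring
  rw [Finset.sum_congr rfl fun j _ => hterm j, Finset.sum_sub_distrib, Finset.sum_add_distrib,
    ← Finset.sum_mul, hw.2, one_mul, Finset.mul_sum]

lemma sum_tiltedKernel_mul_log_div (hQ : IsPmf Q) :
    ∑ j, tiltedKernel ρ Q l x j * log (tiltedKernel ρ Q l x j / Q j)
      = l * ∑ j, tiltedKernel ρ Q l x j * ρ x j - log (partitionFn ρ Q l x) := by
  rw [sum_mul_log_div_eq (ρ := ρ) (l := l) (x := x) hQ (tiltedKernel_mem_stdSimplex hQ)
    fun j => pos_of_tiltedKernel_pos hQ, Finset.sum_eq_zero fun j _ => ?_, zero_add]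
  rcases eq_or_ne (tiltedKernel ρ Q l x j) 0 with h | h <;> simp [h]

end Tilting

structure IsBoundedDistortion {k : ℕ} (P : Measure ℝ) (ρ : ℝ → Fin k → ℝ) (M : ℝ) : Prop where
  measurable : ∀ j, Measurable fun x => ρ x j
  ae_mem_Icc : ∀ᵐ x ∂P, ∀ j, ρ x j ∈ Set.Icc 0 M

lemma Lam_eq_integral {k : ℕ} {P : Measure ℝ} {ρ : ℝ → Fin k → ℝ} {Q : Fin k → ℝ} {l : ℝ} :
    Lam P ρ Q l = ∫ x, log (partitionFn ρ Q l x) ∂P := rfl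

lemma Lam_zero {k : ℕ} {P : Measure ℝ} {ρ : ℝ → Fin k → ℝ} {Q : Fin k → ℝ} (hQ : IsPmf Q) :
    Lam P ρ Q 0 = 0 := by
  simp [Lam, hQ.2]

noncomputable def tiltedDistortion {k : ℕ} (P : Measure ℝ) (ρ : ℝ → Fin k → ℝ)
    (Q : Fin k → ℝ) (l : ℝ) : ℝ :=
  ∫ x, ∑ j, tiltedKernel ρ Q l x j * ρ x j ∂P

section LogMGF

variable {k : ℕ} {P : Measure ℝ} [IsProbabilityMeasure P] {ρ : ℝ → Fin k → ℝ}
  {Q : Fin k → ℝ} {M : ℝ}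

lemma integrable_log_partitionFn (hρ : IsBoundedDistortion P ρ M) (hQ : IsPmf Q) (l : ℝ) :
    Integrable (fun x => log (partitionFn ρ Q l x)) P :=
  (integrable_const (M * |l|)).mono'
    (measurable_partitionFn hρ.measurable).log.aestronglyMeasurable
    (hρ.ae_mem_Icc.mono fun _ hx => abs_log_partitionFn_le hQ hx)

lemma integrable_sum_mul_rho (hρ : IsBoundedDistortion P ρ M) {w : ℝ → Fin k → ℝ}
    (hw : Measurable w) (hws : ∀ x, w x ∈ stdSimplex ℝ (Fin k)) :
    Integrable (fun x => ∑ j, w x j * ρ x j) P :=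
  (integrable_const M).mono'
    (Finset.measurable_sum _ fun j _ => (measurable_pi_apply j |>.comp hw).mul
      (hρ.measurable j)).aestronglyMeasurable
    (hρ.ae_mem_Icc.mono fun x hx => norm_le_of_mem_Icc_zero (sum_mul_mem_Icc (hws x) hx))

lemma hasDerivAt_Lam_s15 (hρ : IsBoundedDistortion P ρ M) (hQ : IsPmf Q) (l : ℝ) :
    HasDerivAt (Lam P ρ Q) (tiltedDistortion P ρ Q l) l :=
  (hasDerivAt_integral_of_dominated_loc_of_deriv_le (F := fun t x => log (partitionFn ρ Q t x))
    Filter.univ_mem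
    (Filter.Eventually.of_forall fun t => (integrable_log_partitionFn hρ hQ t).1)
    (integrable_log_partitionFn hρ hQ l)
    (integrable_sum_mul_rho hρ (measurable_tiltedKernel hρ.measurable)
      fun _ => tiltedKernel_mem_stdSimplex hQ).1
    (hρ.ae_mem_Icc.mono fun _ hx _ _ =>
      norm_le_of_mem_Icc_zero (sum_mul_mem_Icc (tiltedKernel_mem_stdSimplex hQ) hx))
    (integrable_const M)
    (Filter.Eventually.of_forall fun _ _ _ => hasDerivAt_log_partitionFn hQ)).2

lemma norm_tiltedDistortion_le (hρ : IsBoundedDistortion P ρ M) (hQ : IsPmf Q) (l : ℝ) :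
    ‖tiltedDistortion P ρ Q l‖ ≤ M := by
  simpa [tiltedDistortion] using norm_integral_le_of_norm_le_const (μ := P)
    (hρ.ae_mem_Icc.mono fun x hx =>
      norm_le_of_mem_Icc_zero (sum_mul_mem_Icc (tiltedKernel_mem_stdSimplex hQ (l := l)) hx))

lemma abs_Lam_sub_le (hρ : IsBoundedDistortion P ρ M) (hQ : IsPmf Q) (l l' : ℝ) :
    |Lam P ρ Q l - Lam P ρ Q l'| ≤ M * |l - l'| :=
  convex_univ.norm_image_sub_le_of_norm_hasDerivWithin_le
    (fun t _ => (hasDerivAt_Lam_s15 hρ hQ t).hasDerivWithinAt)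
    (fun t _ => norm_tiltedDistortion_le hρ hQ t) (Set.mem_univ l') (Set.mem_univ l)

lemma continuousOn_Lam (hρ : IsBoundedDistortion P ρ M) (l : ℝ) :
    ContinuousOn (fun Q => Lam P ρ Q l) (stdSimplex ℝ (Fin k)) :=
  continuousOn_of_dominated (bound := fun _ => M * |l|)
    (fun _ hQ => (integrable_log_partitionFn hρ hQ l).1)
    (fun _ hQ => hρ.ae_mem_Icc.mono fun _ hx => abs_log_partitionFn_le hQ hx)
    (integrable_const _)
    (Filter.Eventually.of_forall fun _ =>
      ((continuous_partitionFn_prod.comp (Continuous.prodMk_left l)).continuousOn).log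
        fun _ hQ => (partitionFn_pos hQ).ne')

lemma continuousOn_tiltedDistortion (hρ : IsBoundedDistortion P ρ M) :
    ContinuousOn (fun p : (Fin k → ℝ) × ℝ => tiltedDistortion P ρ p.1 p.2)
      (stdSimplex ℝ (Fin k) ×ˢ Set.univ) :=
  continuousOn_of_dominated (bound := fun _ => M)
    (fun p hp => (integrable_sum_mul_rho hρ (measurable_tiltedKernel hρ.measurable)
      fun _ => tiltedKernel_mem_stdSimplex hp.1).1)
    (fun p hp => hρ.ae_mem_Icc.mono fun _ hx =>
      norm_le_of_mem_Icc_zero (sum_mul_mem_Icc (tiltedKernel_mem_stdSimplex hp.1) hx))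
    (integrable_const _)
    (Filter.Eventually.of_forall fun x => by
      unfold tiltedKernel
      exact continuousOn_finsetSum _ fun j _ => ((by fun_prop : Continuous fun p :
        (Fin k → ℝ) × ℝ => p.1 j * exp (p.2 * ρ x j)).continuousOn.div
          continuous_partitionFn_prod.continuousOn
          fun p hp => (partitionFn_pos hp.1).ne').mul continuousOn_const)

lemma exists_tiltedDistortion_eq_slope (hρ : IsBoundedDistortion P ρ M) (hQ : IsPmf Q)
    {a b : ℝ} (hab : a ≠ b) :
    ∃ ξ ∈ Set.uIcc a b, tiltedDistortion P ρ Q ξ = slope (Lam P ρ Q) a b := by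
  wlog h : a < b generalizing a b
  · obtain ⟨ξ, hξ, heq⟩ := this hab.symm (hab.lt_or_gt.resolve_left h)
    exact ⟨ξ, Set.uIcc_comm a b ▸ hξ, heq.trans (slope_comm _ _ _)⟩
  obtain ⟨ξ, hξ, heq⟩ := exists_hasDerivAt_eq_slope (Lam P ρ Q) (tiltedDistortion P ρ Q) h
    (fun t _ => (hasDerivAt_Lam_s15 hρ hQ t).continuousAt.continuousWithinAt)
    (fun t _ => hasDerivAt_Lam_s15 hρ hQ t)
  exact ⟨ξ, Set.Icc_subset_uIcc (Set.Ioo_subset_Icc_self hξ),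
    heq.trans (slope_def_field _ _ _).symm⟩

lemma concaveOn_Lam (hρ : IsBoundedDistortion P ρ M) (l : ℝ) :
    ConcaveOn ℝ (stdSimplex ℝ (Fin k)) fun Q => Lam P ρ Q l := by
  refine ⟨convex_stdSimplex ℝ (Fin k), fun Q hQ Q' hQ' a b ha hb hab => ?_⟩
  have hlog : ∀ x, a * log (partitionFn ρ Q l x) + b * log (partitionFn ρ Q' l x)
      ≤ log (partitionFn ρ (a • Q + b • Q') l x) := fun x => by
    have hmix : partitionFn ρ (a • Q + b • Q') l x
        = a * partitionFn ρ Q l x + b * partitionFn ρ Q' l x := by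
      simp only [partitionFn, Finset.mul_sum, ← Finset.sum_add_distrib]
      exact Finset.sum_congr rfl fun j _ => by
        simp only [Pi.add_apply, Pi.smul_apply, smul_eq_mul]; ring
    rw [hmix]
    exact strictConcaveOn_log_Ioi.concaveOn.2 (partitionFn_pos hQ) (partitionFn_pos hQ') ha hb hab
  have hint := fun Q (hQ : IsPmf Q) => integrable_log_partitionFn hρ hQ l
  calc a • Lam P ρ Q l + b • Lam P ρ Q' l
      = ∫ x, a * log (partitionFn ρ Q l x) + b * log (partitionFn ρ Q' l x) ∂P := by
        rw [integral_add ((hint Q hQ).const_mul a) ((hint Q' hQ').const_mul b),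
          integral_const_mul, integral_const_mul]; rfl
    _ ≤ Lam P ρ (a • Q + b • Q') l :=
        integral_mono (((hint Q hQ).const_mul a).add ((hint Q' hQ').const_mul b))
          (hint _ (convex_stdSimplex ℝ (Fin k) hQ hQ' ha hb hab)) hlog

lemma integrable_rho (hρ : IsBoundedDistortion P ρ M) (j : Fin k) :
    Integrable (fun x => ρ x j) P :=
  (integrable_const M).mono' (hρ.measurable j).aestronglyMeasurable
    (hρ.ae_mem_Icc.mono fun _ hx => norm_le_of_mem_Icc_zero (hx j))

lemma Lam_le_quadratic (hρ : IsBoundedDistortion P ρ M) (hQ : IsPmf Q) {l : ℝ} (hl : l ≤ 0) :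
    Lam P ρ Q l ≤ l * DmaxPQ P ρ Q + l ^ 2 * M ^ 2 / 2 := by
  have hpt : ∀ᵐ x ∂P, log (partitionFn ρ Q l x) ≤ l * ∑ j, Q j * ρ x j + l ^ 2 * M ^ 2 / 2 := by
    filter_upwards [hρ.ae_mem_Icc] with x hx
    have hterm : ∀ j, Q j * (exp (l * ρ x j) - 1) ≤ Q j * (l * ρ x j + l ^ 2 * M ^ 2 / 2) :=
      fun j => by
        have hsq : (l * ρ x j) ^ 2 ≤ l ^ 2 * M ^ 2 := by
          rw [mul_pow]; gcongr; exacts [(hx j).1, (hx j).2]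
        have := exp_le_quadratic_of_nonpos (mul_nonpos_of_nonpos_of_nonneg hl (hx j).1)
        exact mul_le_mul_of_nonneg_left (by linarith) (hQ.1 j)
    calc log (partitionFn ρ Q l x) ≤ partitionFn ρ Q l x - 1 :=
          log_le_sub_one_of_pos (partitionFn_pos hQ)
      _ = ∑ j, Q j * (exp (l * ρ x j) - 1) := by
          simp only [partitionFn, mul_sub, mul_one, Finset.sum_sub_distrib, hQ.2]
      _ ≤ ∑ j, Q j * (l * ρ x j + l ^ 2 * M ^ 2 / 2) := Finset.sum_le_sum fun j _ => hterm j
      _ = l * ∑ j, Q j * ρ x j + l ^ 2 * M ^ 2 / 2 := by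
          simp only [mul_add, Finset.sum_add_distrib, ← Finset.sum_mul, hQ.2, one_mul,
            Finset.mul_sum]
          exact congrArg (· + _) (Finset.sum_congr rfl fun j _ => by ring)
  have hρQ : Integrable (fun x => ∑ j, Q j * ρ x j) P :=
    integrable_finsetSum _ fun j _ => (integrable_rho hρ j).const_mul (Q j)
  calc Lam P ρ Q l ≤ ∫ x, (l * ∑ j, Q j * ρ x j + l ^ 2 * M ^ 2 / 2) ∂P :=
        integral_mono_ae (integrable_log_partitionFn hρ hQ l)
          ((hρQ.const_mul l).add (integrable_const _)) hpt
    _ = l * DmaxPQ P ρ Q + l ^ 2 * M ^ 2 / 2 := by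
        rw [integral_add (hρQ.const_mul l) (integrable_const _), integral_const_mul,
          integral_finsetSum _ fun j _ => (integrable_rho hρ j).const_mul (Q j)]
        simp [DmaxPQ, integral_const_mul]

lemma neg_log_card_le_Lam_uniform (hρ : IsBoundedDistortion P ρ M) (hk : 0 < k)
    (hmin : ∀ᵐ x ∂P, ∃ j, ρ x j = 0) (l : ℝ) :
    -log k ≤ Lam P ρ (fun _ => (k : ℝ)⁻¹) l := by
  have hpt : ∀ᵐ x ∂P, -log k ≤ log (partitionFn ρ (fun _ => (k : ℝ)⁻¹) l x) := by
    filter_upwards [hmin] with x ⟨j, hj⟩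
    rw [← log_inv]
    refine log_le_log (by positivity) ?_
    calc (k : ℝ)⁻¹ = (k : ℝ)⁻¹ * exp (l * ρ x j) := by simp [hj]
      _ ≤ partitionFn ρ (fun _ => (k : ℝ)⁻¹) l x :=
          Finset.single_le_sum (f := fun j => (k : ℝ)⁻¹ * exp (l * ρ x j))
            (fun _ _ => by positivity) (Finset.mem_univ j)
  rw [Lam_eq_integral]
  simpa using integral_mono_ae (integrable_const _)
    (integrable_log_partitionFn hρ (IsPmf.uniform hk) l) hpt

end LogMGF

section Gamma

variable {k : ℕ} {P : Measure ℝ} {ρ : ℝ → Fin k → ℝ} {Q : Fin k → ℝ} {M l : ℝ}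

lemma Gamma_le (hk : 0 < k) {c : ℝ} (h : ∀ Q, IsPmf Q → Lam P ρ Q l ≤ c) :
    Gamma P ρ l ≤ c :=
  csSup_le ⟨_, _, IsPmf.uniform hk, rfl⟩ fun _ ⟨Q, hQ, hy⟩ => hy ▸ h Q hQ

lemma Gamma_zero (hk : 0 < k) : Gamma P ρ 0 = 0 := by
  have hset : {y : ℝ | ∃ Q : Fin k → ℝ, IsPmf Q ∧ y = Lam P ρ Q 0} = {0} := by
    ext y
    refine ⟨fun ⟨Q, hQ, hy⟩ => hy.trans (Lam_zero hQ), fun hy => ?_⟩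
    exact ⟨_, IsPmf.uniform hk, hy.trans (Lam_zero (IsPmf.uniform hk)).symm⟩
  rw [_root_.Gamma, hset, csSup_singleton]

variable [IsProbabilityMeasure P]

lemma Lam_le_Gamma (hρ : IsBoundedDistortion P ρ M) (hQ : IsPmf Q) (l : ℝ) :
    Lam P ρ Q l ≤ Gamma P ρ l := by
  refine le_csSup ⟨M * |l|, fun _ ⟨Q', hQ', hy⟩ => hy ▸ ?_⟩ ⟨Q, hQ, rfl⟩
  simpa [Lam_zero hQ'] using (abs_le.1 (abs_Lam_sub_le hρ hQ' l 0)).2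

lemma exists_Lam_eq_Gamma (hk : 0 < k) (hρ : IsBoundedDistortion P ρ M) (l : ℝ) :
    ∃ Q, IsPmf Q ∧ Lam P ρ Q l = Gamma P ρ l := by
  have hset : {y : ℝ | ∃ Q : Fin k → ℝ, IsPmf Q ∧ y = Lam P ρ Q l}
      = (fun Q => Lam P ρ Q l) '' stdSimplex ℝ (Fin k) := by
    ext y; simp [isPmf_iff_mem_stdSimplex, eq_comm]
  rw [_root_.Gamma, hset]
  exact ((isCompact_stdSimplex ℝ (Fin k)).image_of_continuousOn (continuousOn_Lam hρ l)).sSup_mem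
    (Set.Nonempty.image _ ⟨_, IsPmf.uniform hk⟩)

lemma abs_Gamma_sub_le (hk : 0 < k) (hρ : IsBoundedDistortion P ρ M) (l l' : ℝ) :
    |Gamma P ρ l - Gamma P ρ l'| ≤ M * |l - l'| := by
  have key : ∀ l l', Gamma P ρ l ≤ Gamma P ρ l' + M * |l - l'| := fun l l' =>
    Gamma_le hk fun Q hQ => by
      linarith [(abs_le.1 (abs_Lam_sub_le hρ hQ l l')).2, Lam_le_Gamma hρ hQ l']
  rw [abs_sub_le_iff]
  constructor
  · linarith [key l l']
  · rw [abs_sub_comm l l']; linarith [key l' l]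

lemma continuous_Gamma (hk : 0 < k) (hρ : IsBoundedDistortion P ρ M) :
    Continuous (Gamma P ρ) :=
  (LipschitzWith.of_dist_le' fun l l' => by
    simpa only [Real.dist_eq] using abs_Gamma_sub_le hk hρ l l').continuous

end Gamma

lemma Dmax_le_DmaxPQ {k : ℕ} {P : Measure ℝ} {ρ : ℝ → Fin k → ℝ} {Q : Fin k → ℝ}
    (hQ : IsPmf Q) : Dmax P ρ ≤ DmaxPQ P ρ Q :=
  calc Dmax P ρ = ∑ j, Q j * Dmax P ρ := by rw [← Finset.sum_mul, hQ.2, one_mul]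
    _ ≤ DmaxPQ P ρ Q := Finset.sum_le_sum fun j _ => mul_le_mul_of_nonneg_left
        (csInf_le (Set.finite_range _).bddBelow ⟨j, rfl⟩) (hQ.1 j)

section Legendre

variable {k : ℕ} {P : Measure ℝ} [IsProbabilityMeasure P] {ρ : ℝ → Fin k → ℝ} {M D : ℝ}

lemma exists_Gamma_lt_mul (hk : 0 < k) (hρ : IsBoundedDistortion P ρ M) (hD : D < Dmax P ρ) :
    ∃ l ≤ 0, Gamma P ρ l < l * D := by
  set m := (Dmax P ρ - D) / (M ^ 2 + 1)
  have hm : 0 < m := div_pos (by linarith) (by positivity)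
  have hδ : Dmax P ρ - D = m * (M ^ 2 + 1) := (div_mul_cancel₀ _ (by positivity)).symm
  have hΓ : Gamma P ρ (-m) ≤ -m * Dmax P ρ + (-m) ^ 2 * M ^ 2 / 2 :=
    Gamma_le hk fun Q hQ => (Lam_le_quadratic hρ hQ (by linarith)).trans
      (by nlinarith [Dmax_le_DmaxPQ (P := P) (ρ := ρ) hQ])
  exact ⟨-m, by linarith, by nlinarith [mul_pos hm hm]⟩

lemma exists_neg_isMaxOn_mul_sub_Gamma (hk : 0 < k) (hρ : IsBoundedDistortion P ρ M)
    (hmin : ∀ᵐ x ∂P, ∃ j, ρ x j = 0) (hD0 : 0 < D) (hD : D < Dmax P ρ) :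
    ∃ ls < 0, IsMaxOn (fun l => l * D - Gamma P ρ l) (Set.Iic 0) ls := by
  obtain ⟨l₀, hl₀, hlt⟩ := exists_Gamma_lt_mul hk hρ hD
  -- `Γ ≥ Λ_uniform ≥ -log k` makes the objective negative left of `-log k / D`.
  obtain ⟨ls, hls, hmax⟩ := exists_isMaxOn_Iic (f := fun l => l * D - Gamma P ρ l)
    (T := log k / D) ((continuous_id.mul continuous_const).sub (continuous_Gamma hk hρ)) hl₀
    fun l hl => by
      have hlD : l * D < -log k := (lt_div_iff₀ hD0).1 (by rwa [neg_div])
      have := (neg_log_card_le_Lam_uniform hρ hk hmin l).trans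
        (Lam_le_Gamma hρ (IsPmf.uniform hk) l)
      linarith
  refine ⟨ls, lt_of_le_of_ne hls fun h => ?_, hmax⟩
  have h₀ : l₀ * D - Gamma P ρ l₀ ≤ ls * D - Gamma P ρ ls := hmax (Set.mem_Iic.2 hl₀)
  rw [h, zero_mul, Gamma_zero hk] at h₀
  linarith

end Legendre

section Danskin

open Filter Topology

variable {k : ℕ} {P : Measure ℝ} [IsProbabilityMeasure P] {ρ : ℝ → Fin k → ℝ} {M : ℝ}

lemma exists_Lam_eq_Gamma_tiltedDistortion_mem (hk : 0 < k) (hρ : IsBoundedDistortion P ρ M)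
    {C : Set ℝ} (hC : IsClosed C) {ls : ℝ} {u : ℕ → ℝ} (hu : Tendsto u atTop (𝓝 ls))
    (hne : ∀ n, u n ≠ ls)
    (hslope : ∀ n Q, IsPmf Q → Lam P ρ Q (u n) = Gamma P ρ (u n) →
      slope (Lam P ρ Q) (u n) ls ∈ C) :
    ∃ Q, IsPmf Q ∧ Lam P ρ Q ls = Gamma P ρ ls ∧ tiltedDistortion P ρ Q ls ∈ C := by
  choose Qn hQn hQnΓ using fun n => exists_Lam_eq_Gamma hk hρ (u n)
  choose ξ hξ hξslope using fun n => exists_tiltedDistortion_eq_slope hρ (hQn n) (hne n)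
  obtain ⟨Q, hQ, φ, hφ, hQφ⟩ := (isCompact_stdSimplex ℝ (Fin k)).tendsto_subseq hQn
  have huφ : Tendsto (u ∘ φ) atTop (𝓝 ls) := hu.comp hφ.tendsto_atTop
  have hξφ : Tendsto (ξ ∘ φ) atTop (𝓝 ls) := by
    rw [tendsto_iff_dist_tendsto_zero] at huφ ⊢
    refine squeeze_zero (fun _ => dist_nonneg) (fun n => ?_) huφ
    exact Real.dist_right_le_of_mem_uIcc (hξ (φ n))
  have hΦ : Tendsto (fun n => tiltedDistortion P ρ (Qn (φ n)) (ξ (φ n))) atTop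
      (𝓝 (tiltedDistortion P ρ Q ls)) := by
    have hp : Tendsto (fun n => (Qn (φ n), ξ (φ n))) atTop
        (𝓝[stdSimplex ℝ (Fin k) ×ˢ Set.univ] (Q, ls)) :=
      tendsto_nhdsWithin_iff.2 ⟨hQφ.prodMk_nhds hξφ,
        Eventually.of_forall fun n => Set.mk_mem_prod (hQn _) trivial⟩
    exact (((continuousOn_tiltedDistortion hρ) (Q, ls) (Set.mk_mem_prod hQ trivial)).tendsto.comp
      hp :)
  -- `Qn n` maximizes `Λ_Q(ls)` up to `2M|u n - ls|`, as `Λ_Q` and `Γ` are `M`-Lipschitz.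
  have hΛ : Tendsto (fun n => Lam P ρ (Qn (φ n)) ls + 2 * M * |u (φ n) - ls|) atTop
      (𝓝 (Lam P ρ Q ls)) := by
    have hcont := ((continuousOn_Lam hρ ls) Q hQ).tendsto.comp
      (tendsto_nhdsWithin_iff.2 ⟨hQφ, Eventually.of_forall fun n => hQn (φ n)⟩)
    have hdist : Tendsto (fun n => |u (φ n) - ls|) atTop (𝓝 0) := by
      simpa using (huφ.sub_const ls).abs
    simpa using hcont.add (hdist.const_mul (2 * M))
  refine ⟨Q, hQ, le_antisymm (Lam_le_Gamma hρ hQ ls) (ge_of_tendsto' hΛ fun n => ?_),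
    hC.mem_of_tendsto hΦ (Eventually.of_forall fun n => ?_)⟩
  · have h1 := (abs_le.1 (abs_Gamma_sub_le hk hρ ls (u (φ n)))).2
    have h2 := (abs_le.1 (abs_Lam_sub_le hρ (hQn (φ n)) (u (φ n)) ls)).2
    rw [abs_sub_comm] at h1
    linarith [hQnΓ (φ n)]
  · rw [hξslope]
    exact hslope _ _ (hQn _) (hQnΓ _)

lemma Lam_combo_eq_Gamma (hρ : IsBoundedDistortion P ρ M) {Q₁ Q₂ : Fin k → ℝ} {l : ℝ}
    (hQ₁ : IsPmf Q₁) (hQ₂ : IsPmf Q₂) (h₁ : Lam P ρ Q₁ l = Gamma P ρ l)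
    (h₂ : Lam P ρ Q₂ l = Gamma P ρ l) {a b : ℝ} (ha : 0 ≤ a) (hb : 0 ≤ b) (hab : a + b = 1) :
    Lam P ρ (a • Q₁ + b • Q₂) l = Gamma P ρ l := by
  refine le_antisymm (Lam_le_Gamma hρ (convex_stdSimplex ℝ (Fin k) hQ₁ hQ₂ ha hb hab) l) ?_
  simpa only [smul_eq_mul, h₁, h₂, ← add_mul, hab, one_mul] using
    (concaveOn_Lam hρ l).2 hQ₁ hQ₂ ha hb hab

/-- Danskin's argument: maximizers of `Λ_Q` at points left (right) of `ls` have slopes `≤ D`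
(`≥ D`) towards `ls`, and in the limit give maximizers at `ls` with `Λ'_Q(ls) ≤ D` (`≥ D`);
maximizers at `ls` form a convex set, so the intermediate value theorem on a segment hits `D`. -/
lemma exists_Lam_eq_Gamma_tiltedDistortion_eq (hk : 0 < k) (hρ : IsBoundedDistortion P ρ M)
    {D ls : ℝ} (hls : ls < 0) (hmax : IsMaxOn (fun l => l * D - Gamma P ρ l) (Set.Iic 0) ls) :
    ∃ Q, IsPmf Q ∧ Lam P ρ Q ls = Gamma P ρ ls ∧ tiltedDistortion P ρ Q ls = D := by
  have hmax' : ∀ l ≤ 0, l * D - Gamma P ρ l ≤ ls * D - Gamma P ρ ls := fun l hl => hmax hl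
  obtain ⟨u, -, hu, hlim⟩ := exists_seq_strictMono_tendsto' (sub_one_lt ls)
  obtain ⟨Q₁, hQ₁, hΓ₁, hD₁⟩ :=
    exists_Lam_eq_Gamma_tiltedDistortion_mem hk hρ (isClosed_Iic (a := D)) hlim
    (fun n => (hu n).2.ne) fun n Q hQ hQΓ => by
      rw [Set.mem_Iic, slope_def_field, div_le_iff₀ (sub_pos.2 (hu n).2)]
      linarith [Lam_le_Gamma hρ hQ ls, hmax' (u n) ((hu n).2.trans hls).le]
  obtain ⟨v, -, hv, hvlim⟩ := exists_seq_strictAnti_tendsto' hls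
  obtain ⟨Q₂, hQ₂, hΓ₂, hD₂⟩ :=
    exists_Lam_eq_Gamma_tiltedDistortion_mem hk hρ (isClosed_Ici (a := D)) hvlim
    (fun n => (hv n).1.ne') fun n Q hQ hQΓ => by
      rw [Set.mem_Ici, slope_comm, slope_def_field, le_div_iff₀ (sub_pos.2 (hv n).1)]
      linarith [Lam_le_Gamma hρ hQ ls, hmax' (v n) (hv n).2.le]
  have hQt : ∀ t ∈ Set.Icc (0 : ℝ) 1, IsPmf ((1 - t) • Q₁ + t • Q₂) := fun t ht =>
    convex_stdSimplex ℝ (Fin k) hQ₁ hQ₂ (sub_nonneg.2 ht.2) ht.1 (sub_add_cancel 1 t)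
  have hcont : ContinuousOn (fun t : ℝ => tiltedDistortion P ρ ((1 - t) • Q₁ + t • Q₂) ls)
      (Set.Icc 0 1) :=
    ((continuousOn_tiltedDistortion hρ).comp (by fun_prop : Continuous fun t : ℝ =>
      ((1 - t) • Q₁ + t • Q₂, ls)).continuousOn fun t ht => Set.mk_mem_prod (hQt t ht) trivial :)
  have hends : D ∈ Set.Icc (tiltedDistortion P ρ ((1 - 0 : ℝ) • Q₁ + (0 : ℝ) • Q₂) ls)
      (tiltedDistortion P ρ ((1 - 1 : ℝ) • Q₁ + (1 : ℝ) • Q₂) ls) := by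
    simpa using And.intro hD₁ hD₂
  obtain ⟨t, ht, hDt⟩ := intermediate_value_Icc zero_le_one hcont hends
  exact ⟨_, hQt t ht, Lam_combo_eq_Gamma hρ hQ₁ hQ₂ hΓ₁ hΓ₂ (sub_nonneg.2 ht.2) ht.1
    (sub_add_cancel 1 t), hDt⟩

end Danskin

section RateDistortion

variable {k : ℕ} {P : Measure ℝ} [IsProbabilityMeasure P] {ρ : ℝ → Fin k → ℝ}
  {Q : Fin k → ℝ} {M l D : ℝ}

lemma integrable_sum_mul_log_div {w : ℝ → Fin k → ℝ} (hw : Measurable w)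
    (hws : ∀ x, w x ∈ stdSimplex ℝ (Fin k)) (hwQ : ∀ᵐ x ∂P, ∀ j, 0 < w x j → 0 < Q j) :
    Integrable (fun x => ∑ j, w x j * log (w x j / Q j)) P :=
  (integrable_const (∑ j, (1 + |log (Q j)|))).mono'
    (Finset.measurable_sum _ fun j _ => by fun_prop).aestronglyMeasurable
    (hwQ.mono fun x hx => (norm_sum_le _ _).trans (Finset.sum_le_sum fun j _ =>
      abs_mul_log_div_le (mem_Icc_of_mem_stdSimplex (hws x) j) (hx j)))

lemma mul_sub_Lam_le_integral (hρ : IsBoundedDistortion P ρ M) (hQ : IsPmf Q)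
    {w : ℝ → Fin k → ℝ} (hw : Measurable w) (hws : ∀ x, w x ∈ stdSimplex ℝ (Fin k))
    (hwQ : ∀ᵐ x ∂P, ∀ j, 0 < w x j → 0 < Q j) (hl : l ≤ 0)
    (hD : ∫ x, ∑ j, w x j * ρ x j ∂P ≤ D) :
    l * D - Lam P ρ Q l ≤ ∫ x, ∑ j, w x j * log (w x j / Q j) ∂P := by
  have hpt : ∀ᵐ x ∂P, l * ∑ j, w x j * ρ x j - log (partitionFn ρ Q l x)
      ≤ ∑ j, w x j * log (w x j / Q j) := hwQ.mono fun x hx => by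
    rw [sum_mul_log_div_eq (l := l) hQ (hws x) hx, add_sub_assoc]
    exact le_add_of_nonneg_left (sum_mul_log_div_nonneg (hws x) (tiltedKernel_mem_stdSimplex hQ)
      fun j hj => tiltedKernel_pos hQ (hx j hj))
  have hwρ := (integrable_sum_mul_rho hρ hw hws).const_mul l
  have hZ := integrable_log_partitionFn hρ hQ l
  calc l * D - Lam P ρ Q l ≤ l * (∫ x, ∑ j, w x j * ρ x j ∂P) - Lam P ρ Q l := by
        linarith [mul_le_mul_of_nonpos_left hD hl]
    _ = ∫ x, (l * ∑ j, w x j * ρ x j - log (partitionFn ρ Q l x)) ∂P := by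
        rw [integral_sub hwρ hZ, integral_const_mul, Lam_eq_integral]
    _ ≤ _ := integral_mono_ae (hwρ.sub hZ) (integrable_sum_mul_log_div hw hws hwQ) hpt

lemma le_RofD (hρ : IsBoundedDistortion P ρ M) (hl : l ≤ 0) :
    (((l * D - Gamma P ρ l) / log 2 : ℝ) : EReal) ≤ RofD P ρ D := by
  refine le_iInf₂ fun Q hQ => le_iInf₂ fun w ⟨hw, hw0, hw1, hwD⟩ => ?_
  rw [wCost]
  split_ifs with hwQ
  · rw [EReal.coe_le_coe_iff, integral_sum_mul_logb]
    refine div_le_div_of_nonneg_right ?_ (log_pos one_lt_two).le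
    linarith [Lam_le_Gamma hρ hQ l,
      mul_sub_Lam_le_integral hρ hQ hw (fun x => ⟨fun j => hw0 x j, hw1 x⟩) hwQ hl hwD]
  · exact le_top

lemma RofD_le (hρ : IsBoundedDistortion P ρ M) (hQ : IsPmf Q) (hΓ : Lam P ρ Q l = Gamma P ρ l)
    (hD : tiltedDistortion P ρ Q l = D) :
    RofD P ρ D ≤ (((l * D - Gamma P ρ l) / log 2 : ℝ) : EReal) := by
  refine iInf₂_le_of_le Q hQ (iInf₂_le_of_le (tiltedKernel ρ Q l)
    ⟨measurable_tiltedKernel hρ.measurable, fun x => (tiltedKernel_mem_stdSimplex hQ).1,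
      fun x => (tiltedKernel_mem_stdSimplex hQ).2, hD.le⟩ (le_of_eq ?_))
  rw [wCost, if_pos (Filter.Eventually.of_forall fun x j => pos_of_tiltedKernel_pos hQ),
    integral_sum_mul_logb]
  simp_rw [sum_tiltedKernel_mul_log_div hQ]
  rw [integral_sub ((integrable_sum_mul_rho hρ (measurable_tiltedKernel hρ.measurable)
    fun _ => tiltedKernel_mem_stdSimplex hQ).const_mul l) (integrable_log_partitionFn hρ hQ l),
    integral_const_mul, ← Lam_eq_integral, ← hΓ, ← hD]
  rfl

end RateDistortion

theorem stmt_15_general {k : ℕ} (hk : 0 < k) (A : Set ℝ)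
    (P : Measure ℝ) [IsProbabilityMeasure P] (hsupp : P Aᶜ = 0)
    (M : ℝ) (ρ : ℝ → Fin k → ℝ) (hρmeas : ∀ j, Measurable fun x => ρ x j)
    (hρnn : ∀ x ∈ A, ∀ j, 0 ≤ ρ x j) (hρM : ∀ x ∈ A, ∀ j, ρ x j ≤ M)
    (hρmin : ∀ x ∈ A, ∃ j, ρ x j = 0) :
    ∀ D : ℝ, 0 < D → D < Dmax P ρ →
      (Real.log 2 : EReal) * RofD P ρ D
        = ⨆ l ∈ Set.Iic (0 : ℝ), ((l * D - Gamma P ρ l : ℝ) : EReal) := by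
  intro D hD0 hD
  have hA : ∀ᵐ x ∂P, x ∈ A := ae_iff.2 hsupp
  have hρ : IsBoundedDistortion P ρ M :=
    ⟨hρmeas, hA.mono fun x hx j => ⟨hρnn x hx j, hρM x hx j⟩⟩
  obtain ⟨ls, hls, hmax⟩ := exists_neg_isMaxOn_mul_sub_Gamma hk hρ (hA.mono hρmin) hD0 hD
  obtain ⟨Q, hQ, hΓ, hΦ⟩ := exists_Lam_eq_Gamma_tiltedDistortion_eq hk hρ hls hmax
  have hR : RofD P ρ D = (((ls * D - Gamma P ρ ls) / log 2 : ℝ) : EReal) :=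
    le_antisymm (RofD_le hρ hQ hΓ hΦ) (le_RofD hρ hls.le)
  have hsup : ⨆ l ∈ Set.Iic (0 : ℝ), ((l * D - Gamma P ρ l : ℝ) : EReal)
      = ((ls * D - Gamma P ρ ls : ℝ) : EReal) :=
    le_antisymm (iSup₂_le fun l hl => EReal.coe_le_coe_iff.2 (hmax hl))
      (le_iSup₂_of_le ls hls.le le_rfl)
  rw [hR, hsup, ← EReal.coe_mul, mul_div_cancel₀ _ (log_pos one_lt_two).ne']

/-- **Lemma 2(i).** For every `D ∈ (0, D_max)`,
`(ln 2)·R(D) = sup_{λ ≤ 0} [λ·D − Γ(λ)]`. -/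
theorem stmt_15 {k : ℕ} (hk : 0 < k) (A : Set ℝ) (hA : MeasurableSet A)
    (P : Measure ℝ) [IsProbabilityMeasure P] (hsupp : P Aᶜ = 0)
    (M : ℝ) (ρ : ℝ → Fin k → ℝ) (hρmeas : ∀ j, Measurable fun x => ρ x j)
    (hρnn : ∀ x ∈ A, ∀ j, 0 ≤ ρ x j) (hρM : ∀ x ∈ A, ∀ j, ρ x j ≤ M)
    (hρmin : ∀ x ∈ A, ∃ j, ρ x j = 0)
    (hDmax : 0 < Dmax P ρ) :
    ∀ D : ℝ, 0 < D → D < Dmax P ρ →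
      (Real.log 2 : EReal) * RofD P ρ D
        = ⨆ l ∈ Set.Iic (0 : ℝ), ((l * D - Gamma P ρ l : ℝ) : EReal) :=
  stmt_15_general hk A P hsupp M ρ hρmeas hρnn hρM hρmin
end
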